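/- (Explicit expression for the differential of the development layer output.) Fix d, m, N ∈ ℕ, a sequence x = (x_0, …, x_N) in ℝ^d with increments Δx_i := x_i − x_{i−1}. For every θ, every ξ = (ξ_1, …, ξ_d) ∈ (Matrix (Fin m) (Fin m) ℝ)^d, and every 1 ≤ n ≤ N: fderiv ℝ z_n θ (ξ) = Σ_{i=1}^n z_{i−1}(θ) * (d exp)_{M_θ(Δx_i)}(M_ξ(Δx_i)) * (exp(M_θ(Δx_{i+1})) ⋯ exp(M_θ(Δx_n))), where the trailing ordered product is the identity matrix when i = n and M_ξ(v) := Σ_{j=1}^d v^{(j)} • ξ_j. -/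

import Mathlib

/-! The map `θ ↦ z_n(θ)` is an ordered product of the factors `θ ↦ exp (M_θ Δx_i)`, so the
non-commutative Leibniz rule differentiates one factor at a time, leaving the product of the
earlier factors, `z_{i-1}(θ)`, on the left and that of the later ones on the right. Each factor is
`exp` composed with the linear map `θ ↦ M_θ Δx_i`, whose differential at `θ` is `ξ ↦ M_ξ Δx_i`,
so the chain rule turns its differential into `(d exp)_{M_θ Δx_i} (M_ξ Δx_i)`. -/

attribute [local instance] Matrix.linftyOpNormedAddCommGroup Matrix.linftyOpNormedRing
  Matrix.linftyOpNormedAlgebra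

/-- `M_θ v = ∑ j, v j • θ j`, the trainable linear map of the development layer. -/
noncomputable def devLayerM (d m : ℕ) (θ : Fin d → Matrix (Fin m) (Fin m) ℝ)
    (v : Fin d → ℝ) : Matrix (Fin m) (Fin m) ℝ :=
  ∑ j, v j • θ j

/-- The development layer output `z_n (θ) = exp (M_θ Δx_1) * ⋯ * exp (M_θ Δx_n)`
(ordered product, `z_0 = 1`), where `Δx_i = x i - x (i-1)`. -/
noncomputable def devLayerZ (d m : ℕ) (x : ℕ → Fin d → ℝ) (n : ℕ)
    (θ : Fin d → Matrix (Fin m) (Fin m) ℝ) : Matrix (Fin m) (Fin m) ℝ :=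
  ((List.range n).map
    (fun i => NormedSpace.exp (devLayerM d m θ (x (i + 1) - x i)))).prod

theorem List.drop_range_eq_map (i n : ℕ) :
    (List.range n).drop i = (List.range (n - i)).map (i + ·) := by
  rw [List.range_eq_range', List.drop_range', List.range'_eq_map_range, zero_add, mul_one]

theorem fderiv_list_range_prod_apply {𝕜 E A : Type*} [NontriviallyNormedField 𝕜]
    [NormedAddCommGroup E] [NormedSpace 𝕜 E] [NormedRing A] [NormedAlgebra 𝕜 A]
    {f : ℕ → E → A} {n : ℕ} {x : E} (h : ∀ i < n, DifferentiableAt 𝕜 (f i) x) (v : E) :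
    fderiv 𝕜 (fun y => ((List.range n).map (f · y)).prod) x v =
      ∑ i ∈ Finset.range n, ((List.range i).map (f · x)).prod * fderiv 𝕜 (f i) x v *
        ((List.range (n - (i + 1))).map (fun j => f (i + 1 + j) x)).prod := by
  rw [fderiv_list_prod' fun i hi => h i (List.mem_range.mp hi)]
  simp only [sum_apply, smul_apply, Fin.getElem_fin, List.getElem_range, List.take_range,
    List.drop_range_eq_map, List.map_map, Nat.succ_eq_add_one]
  rw [Fin.sum_univ_eq_sum_range (fun i => ((List.range (min i n)).map (f · x)).prod •
      MulOpposite.op ((List.range (n - (i + 1))).map ((f · x) ∘ (i + 1 + ·))).prod •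
        fderiv 𝕜 (f i) x v), List.length_range]
  refine Finset.sum_congr rfl fun i hi => ?_
  rw [min_eq_left (Finset.mem_range.mp hi).le, op_smul_eq_mul, smul_eq_mul, mul_assoc]
  rfl

theorem hasFDerivAt_devLayerM (d m : ℕ) (v : Fin d → ℝ) (θ : Fin d → Matrix (Fin m) (Fin m) ℝ) :
    HasFDerivAt (devLayerM d m · v)
      (∑ j, v j • ContinuousLinearMap.proj (R := ℝ) (φ := fun _ => Matrix (Fin m) (Fin m) ℝ) j)
      θ :=
  HasFDerivAt.fun_sum fun j _ => (hasFDerivAt_apply j θ).const_smul (v j)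

theorem hasFDerivAt_exp_devLayerM (d m : ℕ) (v : Fin d → ℝ)
    (θ : Fin d → Matrix (Fin m) (Fin m) ℝ) :
    HasFDerivAt (fun θ => NormedSpace.exp (devLayerM d m θ v))
      ((fderiv ℝ NormedSpace.exp (devLayerM d m θ v)).comp
        (∑ j, v j • ContinuousLinearMap.proj j)) θ :=
  (NormedSpace.exp_analytic (𝕂 := ℝ) _).differentiableAt.hasFDerivAt.comp θ
    (hasFDerivAt_devLayerM d m v θ)

theorem fderiv_exp_devLayerM_apply (d m : ℕ) (v : Fin d → ℝ)
    (θ ξ : Fin d → Matrix (Fin m) (Fin m) ℝ) :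
    fderiv ℝ (fun θ => NormedSpace.exp (devLayerM d m θ v)) θ ξ =
      fderiv ℝ NormedSpace.exp (devLayerM d m θ v) (devLayerM d m ξ v) := by
  rw [(hasFDerivAt_exp_devLayerM d m v θ).fderiv, ContinuousLinearMap.comp_apply]
  congr 1
  simp [devLayerM]

/-- The summation index `i` runs over `0, …, n-1` and stands for the step `i+1` of the paper,
with `Δx_{i+1} = x (i+1) - x i`. -/
theorem statement12_general (d m : ℕ) (x : ℕ → Fin d → ℝ)
    (θ ξ : Fin d → Matrix (Fin m) (Fin m) ℝ) (n : ℕ) :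
    fderiv ℝ (devLayerZ d m x n) θ ξ =
      ∑ i ∈ Finset.range n,
        devLayerZ d m x i θ *
          fderiv ℝ (NormedSpace.exp) (devLayerM d m θ (x (i + 1) - x i))
            (devLayerM d m ξ (x (i + 1) - x i)) *
          ((List.range (n - (i + 1))).map
            (fun j => NormedSpace.exp
              (devLayerM d m θ (x (i + 1 + j + 1) - x (i + 1 + j))))).prod := by
  refine (fderiv_list_range_prod_apply (n := n)
    (fun i _ => (hasFDerivAt_exp_devLayerM d m (x (i + 1) - x i) θ).differentiableAt) ξ).trans
    (Finset.sum_congr rfl fun i _ => ?_)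
  -- The two sides use different (defeq, but not reducibly) instance paths on matrices, so `rw` fails.
  exact congrArg (devLayerZ d m x i θ * · * _) (fderiv_exp_devLayerM_apply d m _ θ ξ)

/-- Explicit expression for the differential of the development layer output:
`(d z_n)_θ ξ = ∑_{i=1}^n z_{i-1}(θ) * (d exp)_{M_θ Δx_i} (M_ξ Δx_i) *
(exp (M_θ Δx_{i+1}) ⋯ exp (M_θ Δx_n))`, where the trailing ordered product is the
identity matrix when `i = n`.  (Below the summation index `i` runs over `0, …, n-1`
and corresponds to the step `i+1`, with `Δx_{i+1} = x (i+1) - x i`.) -/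
theorem statement12 (d m N : ℕ) (x : ℕ → Fin d → ℝ)
    (θ ξ : Fin d → Matrix (Fin m) (Fin m) ℝ) (n : ℕ) (h1 : 1 ≤ n) (hN : n ≤ N) :
    fderiv ℝ (devLayerZ d m x n) θ ξ =
      ∑ i ∈ Finset.range n,
        devLayerZ d m x i θ *
          fderiv ℝ (NormedSpace.exp) (devLayerM d m θ (x (i + 1) - x i))
            (devLayerM d m ξ (x (i + 1) - x i)) *
          ((List.range (n - (i + 1))).map
            (fun j => NormedSpace.exp
              (devLayerM d m θ (x (i + 1 + j + 1) - x (i + 1 + j))))).prod :=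
  statement12_general d m x θ ξ n
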